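/- Let c ∈ (0, 1), let f : 2^{[n]} → ℝ be a monotone submodular set function with f(∅) = 0, and let 1 ≤ k ≤ n. Define S_0 = ∅ and, for t = 1, …, k, let S_t = S_{t−1} ∪ {j_t} where j_t ∈ [n] \ S_{t−1} is any element satisfying Δ(j_t|S_{t−1}) ≥ c · max_{j ∈ [n] \ S_{t−1}} Δ(j|S_{t−1}) (a c-multiplicatively-approximate greedy step). Then f(S_k) ≥ c(1 − 1/e) · max_{T ⊆ [n], |T| = k} f(T). -/

import Mathlib

/-!
Let `T` be any set of size `k`. By submodularity, `f T - f A` is at most the sum of the `k`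
marginal gains `Δ(i | A)`, `i ∈ T`, so a `c`-approximate greedy step from `A` gains at least
`(c / k) (f T - f A)`. The gap `f T - f (S t)` therefore shrinks by a factor `1 - c / k` per step,
and after `k` steps it is at most `(1 - c / k) ^ k f T ≤ e^{-c} f T ≤ (1 - c (1 - 1/e)) f T`, the
last step by convexity of `exp` on `[-1, 0]`.
-/

open Finset Real

section Marginal

variable {α : Type*} [DecidableEq α] {f : Finset α → ℝ}

/-- The marginal gain `Δ(i | A)`. -/
def marginal (f : Finset α → ℝ) (A : Finset α) (i : α) : ℝ := f (insert i A) - f A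

lemma marginal_of_mem {A : Finset α} {i : α} (hi : i ∈ A) : marginal f A i = 0 := by
  simp [marginal, insert_eq_of_mem hi]

lemma marginal_nonneg (hmono : Monotone f) (A : Finset α) (i : α) : 0 ≤ marginal f A i :=
  sub_nonneg.2 (hmono (subset_insert i A))

lemma le_add_sum_marginal
    (hsub : ∀ S T : Finset α, S ⊆ T → ∀ i ∉ T, marginal f T i ≤ marginal f S i)
    (A B : Finset α) : f (A ∪ B) ≤ f A + ∑ i ∈ B, marginal f A i := by
  induction B using Finset.induction_on with
  | empty => simp
  | @insert b B hb ih =>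
    rw [union_insert, sum_insert hb]
    by_cases hbAB : b ∈ A ∪ B
    · have hbA : b ∈ A := (mem_union.1 hbAB).resolve_right hb
      rw [insert_eq_of_mem hbAB, marginal_of_mem hbA]
      linarith
    · have h := hsub A (A ∪ B) subset_union_left b hbAB
      unfold marginal at h ih ⊢
      linarith

lemma sub_le_sum_marginal (hmono : Monotone f)
    (hsub : ∀ S T : Finset α, S ⊆ T → ∀ i ∉ T, marginal f T i ≤ marginal f S i)
    (A T : Finset α) : f T - f A ≤ ∑ i ∈ T, marginal f A i := by
  have := le_add_sum_marginal hsub A T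
  linarith [hmono (subset_union_right : T ⊆ A ∪ T)]

variable {c : ℝ} {A T : Finset α} {j : α}

lemma mul_sub_le_card_mul_marginal (hc : 0 ≤ c) (hmono : Monotone f)
    (hsub : ∀ S T : Finset α, S ⊆ T → ∀ i ∉ T, marginal f T i ≤ marginal f S i)
    (hgreedy : ∀ i ∉ A, c * marginal f A i ≤ marginal f A j) :
    c * (f T - f A) ≤ #T * marginal f A j := by
  have hterm : ∀ i ∈ T, c * marginal f A i ≤ marginal f A j := by
    intro i _
    by_cases hi : i ∈ A
    · simpa [marginal_of_mem hi] using marginal_nonneg hmono A j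
    · exact hgreedy i hi
  calc c * (f T - f A) ≤ c * ∑ i ∈ T, marginal f A i :=
        mul_le_mul_of_nonneg_left (sub_le_sum_marginal hmono hsub A T) hc
    _ = ∑ i ∈ T, c * marginal f A i := mul_sum _ _ _
    _ ≤ ∑ _i ∈ T, marginal f A j := sum_le_sum hterm
    _ = #T * marginal f A j := by rw [sum_const, nsmul_eq_mul]

lemma sub_insert_le_mul_sub (hc : 0 ≤ c) (hmono : Monotone f)
    (hsub : ∀ S T : Finset α, S ⊆ T → ∀ i ∉ T, marginal f T i ≤ marginal f S i)
    (hgreedy : ∀ i ∉ A, c * marginal f A i ≤ marginal f A j) (hT : T.Nonempty) :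
    f T - f (insert j A) ≤ (1 - c / #T) * (f T - f A) := by
  have hcard : (0 : ℝ) < #T := by exact_mod_cast hT.card_pos
  have hgain : c / #T * (f T - f A) ≤ marginal f A j := by
    rw [div_mul_eq_mul_div, div_le_iff₀ hcard, mul_comm _ (#T : ℝ)]
    exact mul_sub_le_card_mul_marginal hc hmono hsub hgreedy
  unfold marginal at hgain
  linarith

end Marginal

lemma exp_neg_le_one_sub_mul_one_sub_exp_neg_one {c : ℝ} (hc0 : 0 ≤ c) (hc1 : c ≤ 1) :
    exp (-c) ≤ 1 - c * (1 - exp (-1)) := by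
  have h := convexOn_exp.2 (Set.mem_univ (-1 : ℝ)) (Set.mem_univ 0) hc0 (sub_nonneg.2 hc1)
    (add_sub_cancel c 1)
  simp only [smul_eq_mul, mul_neg, mul_one, mul_zero, add_zero, exp_zero] at h
  linarith

theorem mult_approx_greedy_submodular_cardinality_general
    (c : ℝ) (hc0 : 0 < c) (hc1 : c < 1)
    (n k : ℕ) (hk1 : 1 ≤ k)
    (f : Finset (Fin n) → ℝ)
    (hmono : ∀ S T : Finset (Fin n), S ⊆ T → f S ≤ f T)
    (hsub : ∀ S T : Finset (Fin n), S ⊆ T → ∀ i ∉ T,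
      f (insert i T) - f T ≤ f (insert i S) - f S)
    (hf0 : f ∅ = 0)
    (S : ℕ → Finset (Fin n)) (j : ℕ → Fin n)
    (hS0 : S 0 = ∅)
    (hstep : ∀ t, 1 ≤ t → t ≤ k →
      j t ∉ S (t - 1) ∧ S t = insert (j t) (S (t - 1)) ∧
      ∀ i, i ∉ S (t - 1) →
        c * (f (insert i (S (t - 1))) - f (S (t - 1))) ≤
          f (insert (j t) (S (t - 1))) - f (S (t - 1)))
    (T : Finset (Fin n)) (hT : T.card = k) :
    f (S k) ≥ c * (1 - 1 / Real.exp 1) * f T := by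
  have hmono' : Monotone f := fun A B h => hmono A B h
  have hk : (1 : ℝ) ≤ k := by exact_mod_cast hk1
  have hTne : T.Nonempty := card_pos.1 (by omega)
  have hgap : f T - f (S k) ≤ (1 - c / k) ^ k * (f T - f (S 0)) := by
    refine le_geom (u := fun t => f T - f (S t)) ?_ k fun t ht => ?_
    · exact sub_nonneg.2 ((div_le_one (by linarith)).2 (by linarith))
    obtain ⟨-, hSt, hgreedy⟩ := hstep (t + 1) (by omega) ht
    simp only [Nat.add_sub_cancel] at hSt hgreedy
    rw [hSt, ← hT]
    exact sub_insert_le_mul_sub hc0.le hmono' hsub hgreedy hTne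
  have hpow : (1 - c / k) ^ k ≤ 1 - c * (1 - 1 / exp 1) := by
    rw [one_div, ← exp_neg]
    exact (one_sub_div_pow_le_exp_neg (by linarith)).trans
      (exp_neg_le_one_sub_mul_one_sub_exp_neg_one hc0.le hc1.le)
  have hfT : 0 ≤ f T := hf0 ▸ hmono' (empty_subset T)
  rw [hS0, hf0, sub_zero] at hgap
  linarith [mul_le_mul_of_nonneg_right hpow hfT]

/-- The `c`-multiplicatively-approximate greedy algorithm for monotone
submodular maximization with a cardinality constraint achieves a `c(1 - 1/e)`
approximation. -/
theorem mult_approx_greedy_submodular_cardinality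
    (c : ℝ) (hc0 : 0 < c) (hc1 : c < 1)
    (n k : ℕ) (hk1 : 1 ≤ k) (hkn : k ≤ n)
    (f : Finset (Fin n) → ℝ)
    (hmono : ∀ S T : Finset (Fin n), S ⊆ T → f S ≤ f T)
    (hsub : ∀ S T : Finset (Fin n), S ⊆ T → ∀ i ∉ T,
      f (insert i T) - f T ≤ f (insert i S) - f S)
    (hf0 : f ∅ = 0)
    (S : ℕ → Finset (Fin n)) (j : ℕ → Fin n)
    (hS0 : S 0 = ∅)
    (hstep : ∀ t, 1 ≤ t → t ≤ k →
      j t ∉ S (t - 1) ∧ S t = insert (j t) (S (t - 1)) ∧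
      ∀ i, i ∉ S (t - 1) →
        c * (f (insert i (S (t - 1))) - f (S (t - 1))) ≤
          f (insert (j t) (S (t - 1))) - f (S (t - 1)))
    (T : Finset (Fin n)) (hT : T.card = k) :
    f (S k) ≥ c * (1 - 1 / Real.exp 1) * f T :=
  mult_approx_greedy_submodular_cardinality_general c hc0 hc1 n k hk1 f hmono hsub hf0 S j hS0 hstep
    T hT
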